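/- arXiv:math/0403257 — 3 statements merged into one kernel-verified Lean document; each statement's English description precedes it below -/
import Mathlib

section
/- Let ω be a smooth 1-form on the n-cube D^n = [0,1]^n with values in a Banach algebra, and let η = dω - ω∧ω be its curvature 2-form. Suppose that ω satisfies the 'radial gauge' conditions: ω at points (x_1,…,x_k,0,…,0) evaluated on ∂/∂x_ν vanishes whenever ν ≥ k. Then the sup-norm of ω is bounded by n times the sup-norm of η, i.e. ‖ω‖_∞ ≤ n·‖η‖_∞. -/
/-!
STATEMENT 0: Let ω be a smooth 1-form on the n-cube D^n = [0,1]^n with values in a Banach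
algebra B, and let η = dω - ω∧ω be its curvature 2-form.  If ω satisfies the radial gauge
conditions ω_{(x₁,…,x_k,0,…,0)}(∂_ν) = 0 for ν ≥ k, then ‖ω‖_∞ ≤ n·‖η‖_∞.

We model the 1-form as a smooth map ω : ℝⁿ → (ℝⁿ →L[ℝ] B); its curvature evaluated on the
coordinate vector fields ∂_ν, ∂_μ is
  η(∂_ν,∂_μ) = (Dω(∂_ν))(∂_μ) - (Dω(∂_μ))(∂_ν) - (ω(∂_ν)·ω(∂_μ) - ω(∂_μ)·ω(∂_ν)).
The radial gauge condition (0-indexed) reads: ω_x(∂_ν) = 0 whenever x_j = 0 for all j > ν.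
The sup-norms are taken over the cube and over the coordinate directions.
-/

open Set

noncomputable def coordVec (n : ℕ) (ν : Fin n) : EuclideanSpace ℝ (Fin n) :=
  EuclideanSpace.single ν (1 : ℝ)

/-- The curvature 2-form `η = dω - ω ∧ ω` of `ω`, evaluated at `x` on a pair of coordinate
directions. -/
noncomputable def curvatureAt {n : ℕ} {B : Type*} [NormedRing B] [NormedAlgebra ℝ B]
    (ω : EuclideanSpace ℝ (Fin n) → EuclideanSpace ℝ (Fin n) →L[ℝ] B)
    (x : EuclideanSpace ℝ (Fin n)) (ν μ : Fin n) : B :=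
  fderiv ℝ ω x (coordVec n ν) (coordVec n μ) - fderiv ℝ ω x (coordVec n μ) (coordVec n ν)
    - (ω x (coordVec n ν) * ω x (coordVec n μ) - ω x (coordVec n μ) * ω x (coordVec n ν))

section Aux

variable {n : ℕ} {B : Type*} [NormedRing B] [NormedAlgebra ℝ B]

lemma add_smul_coordVec_apply (x : EuclideanSpace ℝ (Fin n)) (μ j : Fin n) (s : ℝ) :
    (x + s • coordVec n μ) j = x j + (if j = μ then s else 0) := by
  simp [coordVec, EuclideanSpace.single_apply, mul_comm]

lemma hasDerivAt_omega_line
    (ω : EuclideanSpace ℝ (Fin n) → EuclideanSpace ℝ (Fin n) →L[ℝ] B)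
    (hω : ContDiff ℝ (⊤ : ℕ∞) ω) (x v : EuclideanSpace ℝ (Fin n)) (ν : Fin n) (t : ℝ) :
    HasDerivAt (fun s : ℝ => ω (x + s • v) (coordVec n ν))
      (fderiv ℝ ω (x + t • v) v (coordVec n ν)) t := by
  have hc : HasDerivAt (fun s : ℝ => x + s • v) v t := by
    simpa using ((hasDerivAt_id t).smul_const v).const_add x
  have hd : HasFDerivAt ω (fderiv ℝ ω (x + t • v)) (x + t • v) :=
    (hω.differentiable (by simp) (x + t • v)).hasFDerivAt
  have h2 : HasDerivAt (fun s : ℝ => ω (x + s • v)) (fderiv ℝ ω (x + t • v) v) t :=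
    hd.comp_hasDerivAt t hc
  simpa using h2.clm_apply (hasDerivAt_const t (coordVec n ν))

lemma fderiv_tangent_zero
    (ω : EuclideanSpace ℝ (Fin n) → EuclideanSpace ℝ (Fin n) →L[ℝ] B)
    (hω : ContDiff ℝ (⊤ : ℕ∞) ω)
    (hgauge : ∀ x : EuclideanSpace ℝ (Fin n), (∀ i, x i ∈ Icc (0:ℝ) 1) →
      ∀ ν : Fin n, (∀ j : Fin n, ν < j → x j = 0) → ω x (coordVec n ν) = 0)
    (y : EuclideanSpace ℝ (Fin n)) (hy : ∀ i, y i ∈ Icc (0:ℝ) 1)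
    (ν μ : Fin n) (hνμ : ν < μ) (hslice : ∀ j, μ < j → y j = 0) :
    fderiv ℝ ω y (coordVec n ν) (coordVec n μ) = 0 := by
  set s : Set ℝ := Icc (-(y ν)) (1 - y ν) with hs
  have hy0 := (hy ν).1
  have hy1 := (hy ν).2
  have h0s : (0:ℝ) ∈ s := ⟨by linarith, by linarith⟩
  have hlt : -(y ν) < 1 - y ν := by linarith
  have key : ∀ t ∈ s, ω (y + t • coordVec n ν) (coordVec n μ) = 0 := by
    intro t ht
    apply hgauge
    · intro i
      rw [add_smul_coordVec_apply]
      by_cases hi : i = ν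
      · rw [if_pos hi, hi]
        exact ⟨by linarith [ht.1], by linarith [ht.2]⟩
      · simpa [hi] using hy i
    · intro j hj
      have hjν : j ≠ ν := by
        intro h; subst h; exact absurd (hνμ.trans hj) (lt_irrefl _)
      rw [add_smul_coordVec_apply, if_neg hjν, hslice j hj, add_zero]
  have hD := hasDerivAt_omega_line ω hω y (coordVec n ν) μ 0
  rw [zero_smul, add_zero] at hD
  have hD' : HasDerivWithinAt (fun t : ℝ => ω (y + t • coordVec n ν) (coordVec n μ))
      (fderiv ℝ ω y (coordVec n ν) (coordVec n μ)) s 0 := hD.hasDerivWithinAt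
  have hZ : HasDerivWithinAt (fun t : ℝ => ω (y + t • coordVec n ν) (coordVec n μ))
      (0 : B) s 0 :=
    (hasDerivWithinAt_const (0:ℝ) s (0:B)).congr (fun t ht => key t ht) (key 0 h0s)
  exact (uniqueDiffOn_Icc hlt 0 h0s).eq_deriv _ hD' hZ

end Aux

theorem radial_gauge_estimate
    (n : ℕ) (B : Type*) [NormedRing B] [NormedAlgebra ℝ B]
    (ω : EuclideanSpace ℝ (Fin n) → EuclideanSpace ℝ (Fin n) →L[ℝ] B)
    (hω : ContDiff ℝ (⊤ : ℕ∞) ω)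
    -- radial gauge condition:
    (hgauge : ∀ x : EuclideanSpace ℝ (Fin n), (∀ i, x i ∈ Icc (0:ℝ) 1) →
      ∀ ν : Fin n, (∀ j : Fin n, ν < j → x j = 0) → ω x (coordVec n ν) = 0)
    -- C is a bound for the sup-norm of the curvature η on the cube:
    (C : ℝ)
    (hη : ∀ x : EuclideanSpace ℝ (Fin n), (∀ i, x i ∈ Icc (0:ℝ) 1) →
      ∀ ν μ : Fin n, ‖curvatureAt ω x ν μ‖ ≤ C) :
    -- conclusion: ‖ω‖_∞ ≤ n·‖η‖_∞ :
    ∀ x : EuclideanSpace ℝ (Fin n), (∀ i, x i ∈ Icc (0:ℝ) 1) →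
      ∀ ν : Fin n, ‖ω x (coordVec n ν)‖ ≤ n * C := by
  intro x hx ν
  have hC0 : 0 ≤ C := le_trans (norm_nonneg _) (hη x hx ν ν)
  suffices H : ∀ k : ℕ, ∀ z : EuclideanSpace ℝ (Fin n), (∀ i, z i ∈ Icc (0:ℝ) 1) →
      (∀ j : Fin n, k ≤ (j : ℕ) → z j = 0) → ∀ ρ : Fin n,
      ‖ω z (coordVec n ρ)‖ ≤ (k : ℝ) * C by
    exact H n x hx (fun j hj => absurd hj (Nat.not_le.mpr j.isLt)) ν
  intro k
  induction k with
  | zero =>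
    intro z hz h0 ρ
    have : ω z (coordVec n ρ) = 0 := hgauge z hz ρ (fun j _ => h0 j (Nat.zero_le _))
    simp [this]
  | succ k ih =>
    intro z hz h0 ρ
    by_cases hk : k < n
    · set μ : Fin n := ⟨k, hk⟩ with hμ
      by_cases hle : k ≤ (ρ : ℕ)
      · have hzero : ω z (coordVec n ρ) = 0 := by
          apply hgauge z hz ρ
          intro j hj
          apply h0
          have : (ρ : ℕ) < (j : ℕ) := hj
          omega
        rw [hzero, norm_zero]
        positivity
      · have hνμ : ρ < μ := by
          rw [Fin.lt_def]; exact Nat.lt_of_not_le hle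
        have hpt : ∀ t ∈ Icc (0:ℝ) (z μ),
            (∀ i, (z + (t - z μ) • coordVec n μ) i ∈ Icc (0:ℝ) 1)
            ∧ (∀ j, μ < j → (z + (t - z μ) • coordVec n μ) j = 0) := by
          intro t ht
          constructor
          · intro i
            rw [add_smul_coordVec_apply]
            by_cases hi : i = μ
            · rw [if_pos hi, hi]
              have h1 : z μ + (t - z μ) = t := by ring
              rw [h1]
              exact ⟨ht.1, le_trans ht.2 (hz μ).2⟩
            · rw [if_neg hi, add_zero]; exact hz i
          · intro j hj
            have hjμ : j ≠ μ := ne_of_gt hj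
            rw [add_smul_coordVec_apply, if_neg hjμ, add_zero]
            apply h0
            have h2 : (μ : ℕ) < (j : ℕ) := hj
            have h3 : (μ : ℕ) = k := rfl
            omega
        set g : ℝ → B := fun t => ω (z + (t - z μ) • coordVec n μ) (coordVec n ρ) with hg
        have heq : ∀ s : ℝ,
            z - (z μ) • coordVec n μ + s • coordVec n μ = z + (s - z μ) • coordVec n μ := by
          intro s
          rw [sub_smul]
          abel
        have hder : ∀ t ∈ Icc (0:ℝ) (z μ), HasDerivWithinAt g
            (fderiv ℝ ω (z + (t - z μ) • coordVec n μ) (coordVec n μ) (coordVec n ρ))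
            (Icc (0:ℝ) (z μ)) t := by
          intro t ht
          have h := hasDerivAt_omega_line ω hω (z - (z μ) • coordVec n μ) (coordVec n μ) ρ t
          rw [heq t] at h
          have h' : HasDerivAt g
              (fderiv ℝ ω (z + (t - z μ) • coordVec n μ) (coordVec n μ) (coordVec n ρ)) t := by
            refine h.congr_of_eventuallyEq ?_
            filter_upwards with s
            rw [hg, heq s]
          exact h'.hasDerivWithinAt
        have hbound : ∀ t ∈ Icc (0:ℝ) (z μ),
            ‖fderiv ℝ ω (z + (t - z μ) • coordVec n μ) (coordVec n μ) (coordVec n ρ)‖ ≤ C := by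
          intro t ht
          obtain ⟨hy, hsl⟩ := hpt t ht
          set y := z + (t - z μ) • coordVec n μ with hydef
          have h1 : ω y (coordVec n μ) = 0 := hgauge y hy μ hsl
          have h2 : fderiv ℝ ω y (coordVec n ρ) (coordVec n μ) = 0 :=
            fderiv_tangent_zero ω hω hgauge y hy ρ μ hνμ hsl
          have hcurv : curvatureAt ω y ρ μ = -(fderiv ℝ ω y (coordVec n μ) (coordVec n ρ)) := by
            rw [curvatureAt, h1, h2]
            simp
          have hb := hη y hy ρ μ
          rw [hcurv, norm_neg] at hb
          exact hb
        have h0mem : (0:ℝ) ∈ Icc (0:ℝ) (z μ) := ⟨le_refl _, (hz μ).1⟩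
        have hzmem : z μ ∈ Icc (0:ℝ) (z μ) := ⟨(hz μ).1, le_refl _⟩
        have hMVT := (convex_Icc (0:ℝ) (z μ)).norm_image_sub_le_of_norm_hasDerivWithin_le
          hder hbound h0mem hzmem
        have hg1 : g (z μ) = ω z (coordVec n ρ) := by
          rw [hg]; simp
        have hg0 : ‖g 0‖ ≤ (k : ℝ) * C := by
          apply ih _ (hpt 0 h0mem).1
          intro j hj
          by_cases hjμ : j = μ
          · rw [add_smul_coordVec_apply, if_pos hjμ, hjμ]
            ring
          · rw [add_smul_coordVec_apply, if_neg hjμ, add_zero]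
            apply h0
            have h3 : (μ : ℕ) = k := rfl
            have h4 : (j : ℕ) ≠ k := fun h => hjμ (Fin.ext (h.trans h3.symm))
            omega
        have hnorm : ‖z μ - 0‖ ≤ 1 := by
          rw [sub_zero, Real.norm_eq_abs, abs_of_nonneg (hz μ).1]
          exact (hz μ).2
        calc ‖ω z (coordVec n ρ)‖ = ‖g (z μ)‖ := by rw [hg1]
          _ ≤ ‖g (z μ) - g 0‖ + ‖g 0‖ := by
              simpa using norm_add_le (g (z μ) - g 0) (g 0)
          _ ≤ C * ‖z μ - 0‖ + (k : ℝ) * C := add_le_add hMVT hg0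
          _ ≤ C * 1 + (k : ℝ) * C := by nlinarith
          _ = ((k + 1 : ℕ) : ℝ) * C := by push_cast; ring
    · refine le_trans (ih z hz ?_ ρ) ?_
      · intro j hj
        exact absurd (lt_of_lt_of_le j.isLt (Nat.not_lt.mp hk)) (Nat.not_lt.mpr hj)
      · push_cast
        nlinarith
end

section
/- Let A be the C*-algebra of bounded sequences (a_i) with a_i in the compact operators K on l^2(ℕ). Then two projections P, Q in a matrix algebra Mat_r(A) are Murray–von Neumann equivalent if and only if for every i the components P_i, Q_i ∈ Mat_r(K) are Murray–von Neumann equivalent. -/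
/-!
STATEMENT 3: Let A be the C*-algebra of bounded sequences (a_i) with a_i in the compact
operators K = K(l²(ℕ)).  Two projections P, Q ∈ Mat_r(A) are Murray–von Neumann equivalent
iff for every i the components P_i, Q_i ∈ Mat_r(K) are Murray–von Neumann equivalent.

We realize elements of A as sequences of compact operators on ℓ²(ℕ) which are uniformly
bounded in norm; matrices over A are matrices of such sequences, and Murray–von Neumann
equivalence in Mat_r(A) is witnessed by a matrix V over A with V·V* = P, V*·V = Q.
-/

open scoped Matrix ComplexOrder
noncomputable section

/-- The Hilbert space ℓ²(ℕ). -/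
abbrev l2 : Type := lp (fun _ : ℕ => ℂ) 2

/-- The bounded operators on ℓ²(ℕ). -/
abbrev Bop : Type := l2 →L[ℂ] l2

/-- Murray–von Neumann equivalence of two matrices over the compact operators
K ⊂ B(ℓ²(ℕ)), witnessed by a partial isometry with compact entries. -/
def MvNCompact {r : ℕ} (P Q : Matrix (Fin r) (Fin r) Bop) : Prop :=
  ∃ V : Matrix (Fin r) (Fin r) Bop,
    (∀ k l, IsCompactOperator (V k l)) ∧ V * Vᴴ = P ∧ Vᴴ * V = Q

/-- The `i`-th component of a matrix of sequences of operators. -/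
def component {r : ℕ} (P : Matrix (Fin r) (Fin r) (ℕ → Bop)) (i : ℕ) :
    Matrix (Fin r) (Fin r) Bop :=
  fun k l => P k l i

/-- Membership in A = ∏_{i∈ℕ} K (bounded sequences of compact operators), entrywise for a
matrix. -/
def MatOverA {r : ℕ} (P : Matrix (Fin r) (Fin r) (ℕ → Bop)) : Prop :=
  (∀ k l i, IsCompactOperator (P k l i)) ∧ ∃ C : ℝ, ∀ k l i, ‖P k l i‖ ≤ C

/-!
The forward direction is evaluation at each coordinate. Conversely, choose partial isometries
`Wᵢ` with `Wᵢ Wᵢ* = Pᵢ`, `Wᵢ* Wᵢ = Qᵢ` and assemble them into one matrix of sequences. The only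
issue is uniform boundedness, and the C*-identity gives it: `‖(Wᵢ)ₖₗ‖² ≤ ‖(Pᵢ)ₖₖ‖`, since
`(Wᵢ)ₖₗ (Wᵢ)ₖₗ*` is one of the positive summands of `(Wᵢ Wᵢ*)ₖₖ`.
-/

theorem Matrix.norm_apply_sq_le_norm_mul_conjTranspose_apply {A : Type*} [NonUnitalCStarAlgebra A]
    [PartialOrder A] [StarOrderedRing A] {m n : Type*} [Fintype n] (W : Matrix m n A)
    (k : m) (l : n) : ‖W k l‖ ^ 2 ≤ ‖(W * Wᴴ) k k‖ := by
  have hle : W k l * star (W k l) ≤ (W * Wᴴ) k k := by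
    simpa only [Matrix.mul_apply, Matrix.conjTranspose_apply] using
      Finset.single_le_sum (f := fun j => W k j * star (W k j))
        (fun j _ => mul_star_self_nonneg _) (Finset.mem_univ l)
  calc ‖W k l‖ ^ 2 = ‖W k l * star (W k l)‖ := by rw [CStarRing.norm_self_mul_star, sq]
    _ ≤ ‖(W * Wᴴ) k k‖ := CStarAlgebra.norm_le_norm_of_nonneg_of_le (mul_star_self_nonneg _) hle

section Component

variable {r : ℕ}

theorem component_mul (P Q : Matrix (Fin r) (Fin r) (ℕ → Bop)) (i : ℕ) :
    component (P * Q) i = component P i * component Q i := by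
  ext k l
  simp [component, Matrix.mul_apply, Finset.sum_apply]

theorem component_conjTranspose (P : Matrix (Fin r) (Fin r) (ℕ → Bop)) (i : ℕ) :
    component Pᴴ i = (component P i)ᴴ := by
  ext k l
  simp [component, Matrix.conjTranspose_apply]

theorem ext_component {P Q : Matrix (Fin r) (Fin r) (ℕ → Bop)}
    (h : ∀ i, component P i = component Q i) : P = Q := by
  funext k l i
  exact congrFun (congrFun (h i) k) l

def ofComponents (W : ℕ → Matrix (Fin r) (Fin r) Bop) : Matrix (Fin r) (Fin r) (ℕ → Bop) :=
  fun k l i => W i k l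

@[simp]
theorem component_ofComponents (W : ℕ → Matrix (Fin r) (Fin r) Bop) (i : ℕ) :
    component (ofComponents W) i = W i :=
  rfl

theorem exists_norm_le_of_mul_conjTranspose_eq {V P : Matrix (Fin r) (Fin r) (ℕ → Bop)}
    (hVP : V * Vᴴ = P) {C : ℝ} (hC : ∀ k l i, ‖P k l i‖ ≤ C) :
    ∃ C' : ℝ, ∀ k l i, ‖V k l i‖ ≤ C' := by
  refine ⟨√C, fun k l i => Real.le_sqrt_of_sq_le ?_⟩
  calc ‖V k l i‖ ^ 2 ≤ ‖(component V i * (component V i)ᴴ) k k‖ :=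
        Matrix.norm_apply_sq_le_norm_mul_conjTranspose_apply (component V i) k l
    _ = ‖P k k i‖ := by rw [← component_conjTranspose, ← component_mul, hVP]; rfl
    _ ≤ C := hC k k i

end Component

theorem mvn_iff_componentwise_general (r : ℕ)
    (P Q : Matrix (Fin r) (Fin r) (ℕ → Bop))
    (hPA : MatOverA P) :
    -- P ~ Q in Mat_r(A) iff P_i ~ Q_i in Mat_r(K) for all i :
    (∃ V : Matrix (Fin r) (Fin r) (ℕ → Bop),
        MatOverA V ∧ V * Vᴴ = P ∧ Vᴴ * V = Q)
      ↔ ∀ i : ℕ, MvNCompact (component P i) (component Q i) := by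
  constructor
  · rintro ⟨V, ⟨hVcompact, -⟩, hVP, hVQ⟩ i
    refine ⟨component V i, fun k l => hVcompact k l i, ?_, ?_⟩
    · rw [← component_conjTranspose, ← component_mul, hVP]
    · rw [← component_conjTranspose, ← component_mul, hVQ]
  · intro h
    choose W hWcompact hWP hWQ using h
    have hVP : ofComponents W * (ofComponents W)ᴴ = P := ext_component fun i => by
      rw [component_mul, component_conjTranspose, component_ofComponents, hWP]
    have hVQ : (ofComponents W)ᴴ * ofComponents W = Q := ext_component fun i => by
      rw [component_mul, component_conjTranspose, component_ofComponents, hWQ]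
    obtain ⟨C, hC⟩ := hPA.2
    exact ⟨ofComponents W, ⟨fun k l i => hWcompact i k l,
      exists_norm_le_of_mul_conjTranspose_eq hVP hC⟩, hVP, hVQ⟩

theorem mvn_iff_componentwise (r : ℕ)
    (P Q : Matrix (Fin r) (Fin r) (ℕ → Bop))
    (hPA : MatOverA P) (hQA : MatOverA Q)
    (hPsa : Pᴴ = P) (hPidem : P * P = P)    -- P is a projection in Mat_r(A)
    (hQsa : Qᴴ = Q) (hQidem : Q * Q = Q) :  -- Q is a projection in Mat_r(A)
    -- P ~ Q in Mat_r(A) iff P_i ~ Q_i in Mat_r(K) for all i :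
    (∃ V : Matrix (Fin r) (Fin r) (ℕ → Bop),
        MatOverA V ∧ V * Vᴴ = P ∧ Vᴴ * V = Q)
      ↔ ∀ i : ℕ, MvNCompact (component P i) (component Q i) :=
  mvn_iff_componentwise_general r P Q hPA
end
end

section
/- The Higman group H = ⟨a,b,c,d | a⁻¹ba = b², b⁻¹cb = c², c⁻¹dc = d², d⁻¹ad = a²⟩ has no nontrivial finite quotients. -/
/-!
STATEMENT 7: The Higman group
  H = ⟨a,b,c,d | a⁻¹ba = b², b⁻¹cb = c², c⁻¹dc = d², d⁻¹ad = a²⟩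
has no nontrivial finite quotients: every homomorphism from H to a finite group is trivial.
-/

namespace Stmt7

/-- The generators `a, b, c, d` of the free group on four letters. -/
noncomputable def gen (i : Fin 4) : FreeGroup (Fin 4) := FreeGroup.of i

/-- The four Higman relations `x⁻¹ y x (y²)⁻¹`, cyclically. -/
noncomputable def higmanRels : Set (FreeGroup (Fin 4)) :=
  { (gen 0)⁻¹ * gen 1 * gen 0 * (gen 1 * gen 1)⁻¹,
    (gen 1)⁻¹ * gen 2 * gen 1 * (gen 2 * gen 2)⁻¹,
    (gen 2)⁻¹ * gen 3 * gen 2 * (gen 3 * gen 3)⁻¹,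
    (gen 3)⁻¹ * gen 0 * gen 3 * (gen 0 * gen 0)⁻¹ }

/-- The Higman group, given by the above presentation. -/
noncomputable def HigmanGroup : Type := PresentedGroup higmanRels

noncomputable instance : Group HigmanGroup := by unfold HigmanGroup; infer_instance

/-- If a prime `p` divides `2 ^ n - 1` with `n > 0`, then some smaller prime divides `n`. -/
lemma exists_smaller_prime {p n : ℕ} (hp : p.Prime) (hn : 0 < n) (hdvd : p ∣ 2 ^ n - 1) :
    ∃ q, q.Prime ∧ q ∣ n ∧ q < p := by
  have h1 : 1 ≤ 2 ^ n := Nat.one_le_two_pow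
  have hp2 : p ≠ 2 := by
    rintro rfl
    obtain ⟨k, hk⟩ := hdvd
    obtain ⟨m, hm⟩ : 2 ∣ 2 ^ n := dvd_pow_self 2 hn.ne'
    omega
  have hp3 : 3 ≤ p := by have := hp.two_le; omega
  haveI : Fact p.Prime := ⟨hp⟩
  have h2 : (2 : ZMod p) ^ n = 1 := by
    have h0 : ((2 ^ n - 1 : ℕ) : ZMod p) = 0 := (ZMod.natCast_eq_zero_iff _ _).mpr hdvd
    rw [Nat.cast_sub h1] at h0
    push_cast at h0
    rwa [sub_eq_zero] at h0
  have h2ne : (2 : ZMod p) ≠ 0 := by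
    intro h
    have : ((2 : ℕ) : ZMod p) = 0 := by push_cast; exact h
    have hpd : p ∣ 2 := (ZMod.natCast_eq_zero_iff _ _).mp this
    have := Nat.le_of_dvd (by norm_num) hpd
    omega
  set d := orderOf (2 : ZMod p) with hd
  have hd_n : d ∣ n := orderOf_dvd_of_pow_eq_one h2
  have hd_p : d ∣ p - 1 := orderOf_dvd_of_pow_eq_one (ZMod.pow_card_sub_one_eq_one h2ne)
  have hd0 : 0 < d := by
    rcases Nat.eq_zero_or_pos d with h | h
    · exfalso; rw [h] at hd_p; have := Nat.eq_zero_of_zero_dvd hd_p; omega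
    · exact h
  have hd1 : 1 < d := by
    rcases Nat.lt_or_ge d 2 with h | h
    · exfalso
      have hdd : d = 1 := by omega
      have : (2 : ZMod p) = 1 := orderOf_eq_one_iff.mp hdd
      have h10 : (1 : ZMod p) = 0 := by linear_combination this
      exact one_ne_zero h10
    · omega
  have hdp1 : d ≤ p - 1 := Nat.le_of_dvd (by omega) hd_p
  refine ⟨d.minFac, Nat.minFac_prime hd1.ne', d.minFac_dvd.trans hd_n, ?_⟩
  have := Nat.minFac_le hd0
  omega

/-- If `x⁻¹ y x = y²` in a finite group, then `orderOf y ∣ 2 ^ orderOf x - 1`. -/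
lemma orderOf_dvd_of_conj {G : Type*} [Group G] [Finite G] {x y : G}
    (h : x⁻¹ * y * x = y * y) : orderOf y ∣ 2 ^ orderOf x - 1 := by
  have key : ∀ n : ℕ, (x ^ n)⁻¹ * y * x ^ n = y ^ 2 ^ n := by
    intro n
    induction n with
    | zero => simp
    | succ n ih =>
      rw [pow_succ']
      calc (x * x ^ n)⁻¹ * y * (x * x ^ n)
          = (x ^ n)⁻¹ * (x⁻¹ * y * x) * x ^ n := by group
        _ = (x ^ n)⁻¹ * (y * y) * x ^ n := by rw [h]
        _ = ((x ^ n)⁻¹ * y * x ^ n) * ((x ^ n)⁻¹ * y * x ^ n) := by group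
        _ = y ^ 2 ^ n * y ^ 2 ^ n := by rw [ih]
        _ = y ^ 2 ^ (n + 1) := by
            rw [← pow_add]; congr 1
            have : 2 ^ (n + 1) = 2 ^ n * 2 := pow_succ 2 n
            omega
  have hx := key (orderOf x)
  rw [pow_orderOf_eq_one] at hx
  simp only [inv_one, one_mul, mul_one] at hx
  have h1 : 1 ≤ 2 ^ orderOf x := Nat.one_le_two_pow
  have hpow : y ^ (2 ^ orderOf x - 1) = 1 := by
    have h2 : y ^ (2 ^ orderOf x - 1) * y = y ^ 2 ^ orderOf x := by
      rw [← pow_succ]; congr 1; omega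
    rw [← hx] at h2
    exact mul_right_cancel (h2.trans (one_mul y).symm)
  exact orderOf_dvd_of_pow_eq_one hpow

/-- Combinatorial lemma: the cyclic prime-descent forces all four numbers to be 1. -/
lemma quad_eq_one {a b c d : ℕ} (ha : 0 < a) (hb : 0 < b) (hc : 0 < c) (hd : 0 < d)
    (H1 : ∀ p, p.Prime → p ∣ b → ∃ q, q.Prime ∧ q ∣ a ∧ q < p)
    (H2 : ∀ p, p.Prime → p ∣ c → ∃ q, q.Prime ∧ q ∣ b ∧ q < p)
    (H3 : ∀ p, p.Prime → p ∣ d → ∃ q, q.Prime ∧ q ∣ c ∧ q < p)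
    (H4 : ∀ p, p.Prime → p ∣ a → ∃ q, q.Prime ∧ q ∣ d ∧ q < p) :
    a = 1 ∧ b = 1 ∧ c = 1 ∧ d = 1 := by
  set m := a * b * c * d with hm
  have ham : a ∣ m := ⟨b * c * d, by rw [hm]; ring⟩
  have hbm : b ∣ m := ⟨a * c * d, by rw [hm]; ring⟩
  have hcm : c ∣ m := ⟨a * b * d, by rw [hm]; ring⟩
  have hdm : d ∣ m := ⟨a * b * c, by rw [hm]; ring⟩
  have hmpos : 0 < m := by positivity
  have hm1 : m = 1 := by
    by_contra hne
    have hm1' : 1 < m := by omega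
    have hp := Nat.minFac_prime hne
    have hpd : m.minFac ∣ m := Nat.minFac_dvd m
    set p := m.minFac with hpdef
    have hcases : p ∣ a ∨ p ∣ b ∨ p ∣ c ∨ p ∣ d := by
      rcases hp.dvd_mul.mp hpd with h | h
      · rcases hp.dvd_mul.mp h with h' | h'
        · rcases hp.dvd_mul.mp h' with h'' | h''
          · exact Or.inl h''
          · exact Or.inr (Or.inl h'')
        · exact Or.inr (Or.inr (Or.inl h'))
      · exact Or.inr (Or.inr (Or.inr h))
    have : ∃ q, q.Prime ∧ q ∣ m ∧ q < p := by
      rcases hcases with h | h | h | h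
      · obtain ⟨q, hq, hqd, hqp⟩ := H4 p hp h
        exact ⟨q, hq, hqd.trans hdm, hqp⟩
      · obtain ⟨q, hq, hqd, hqp⟩ := H1 p hp h
        exact ⟨q, hq, hqd.trans ham, hqp⟩
      · obtain ⟨q, hq, hqd, hqp⟩ := H2 p hp h
        exact ⟨q, hq, hqd.trans hbm, hqp⟩
      · obtain ⟨q, hq, hqd, hqp⟩ := H3 p hp h
        exact ⟨q, hq, hqd.trans hcm, hqp⟩
    obtain ⟨q, hq, hqm, hqp⟩ := this
    have := Nat.minFac_le_of_dvd hq.two_le hqm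
    omega
  have h1 := Nat.le_of_dvd one_pos (hm1 ▸ ham)
  have h2 := Nat.le_of_dvd one_pos (hm1 ▸ hbm)
  have h3 := Nat.le_of_dvd one_pos (hm1 ▸ hcm)
  have h4 := Nat.le_of_dvd one_pos (hm1 ▸ hdm)
  omega

theorem higman_no_finite_quotients
    (F : Type*) [Group F] [Finite F] (f : HigmanGroup →* F) :
    ∀ x : HigmanGroup, f x = 1 := by
  intro x
  obtain ⟨w, rfl⟩ : ∃ w, PresentedGroup.mk higmanRels w = x := PresentedGroup.mk_surjective _ x
  set φ : FreeGroup (Fin 4) →* F := MonoidHom.comp f (PresentedGroup.mk higmanRels) with hφ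
  show φ w = 1
  have hrel : ∀ r ∈ higmanRels, φ r = 1 := by
    intro r hr
    have h1 : (PresentedGroup.mk higmanRels r : PresentedGroup higmanRels) = 1 := by
      have : r ∈ Subgroup.normalClosure higmanRels := Subgroup.subset_normalClosure hr
      exact (QuotientGroup.eq_one_iff r).mpr this
    have : φ r = f ((PresentedGroup.mk higmanRels) r) := rfl
    rw [this, h1]
    exact map_one f
  set A := φ (gen 0) with hA
  set B := φ (gen 1) with hB
  set C := φ (gen 2) with hC
  set D := φ (gen 3) with hD
  have e1 : A⁻¹ * B * A = B * B := by
    have := hrel _ (by left; rfl)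
    simp only [map_mul, map_inv, ← hA, ← hB] at this
    rwa [mul_inv_eq_one] at this
  have e2 : B⁻¹ * C * B = C * C := by
    have := hrel _ (by right; left; rfl)
    simp only [map_mul, map_inv, ← hB, ← hC] at this
    rwa [mul_inv_eq_one] at this
  have e3 : C⁻¹ * D * C = D * D := by
    have := hrel _ (by right; right; left; rfl)
    simp only [map_mul, map_inv, ← hC, ← hD] at this
    rwa [mul_inv_eq_one] at this
  have e4 : D⁻¹ * A * D = A * A := by
    have := hrel _ (by right; right; right; rfl)
    simp only [map_mul, map_inv, ← hD, ← hA] at this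
    rwa [mul_inv_eq_one] at this
  have key : ∀ (x y : F), x⁻¹ * y * x = y * y →
      ∀ p, p.Prime → p ∣ orderOf y → ∃ q, q.Prime ∧ q ∣ orderOf x ∧ q < p := by
    intro x y h p hp hpd
    exact exists_smaller_prime hp (orderOf_pos x)
      (hpd.trans (orderOf_dvd_of_conj h))
  obtain ⟨h1, h2, h3, h4⟩ := quad_eq_one (orderOf_pos A) (orderOf_pos B)
    (orderOf_pos C) (orderOf_pos D) (key A B e1) (key B C e2) (key C D e3) (key D A e4)
  have hA1 : A = 1 := orderOf_eq_one_iff.mp h1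
  have hB1 : B = 1 := orderOf_eq_one_iff.mp h2
  have hC1 : C = 1 := orderOf_eq_one_iff.mp h3
  have hD1 : D = 1 := orderOf_eq_one_iff.mp h4
  have hgen : ∀ i : Fin 4, φ (FreeGroup.of i) = 1 := by
    intro i
    fin_cases i
    · exact hA1
    · exact hB1
    · exact hC1
    · exact hD1
  have : φ = 1 := FreeGroup.ext_hom φ 1 (by simpa using hgen)
  rw [this]; rfl

end Stmt7
end
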